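/- For every p > 3/2, s ≥ 0, and z₁, z₂ ∈ ℝ^{N×n}, there exist constants c₁, c₂ > 0 depending only on n, N, p such that c₁(s²+|z₁|²+|z₂|²)^{(p−2)/2}|z₁−z₂| ≤ |W_s(z₁)−W_s(z₂)| ≤ c₂(s²+|z₁|²+|z₂|²)^{(p−2)/2}|z₁−z₂|. -/

import Mathlib

/-!
Put `α = (p - 2) / 2 > -1/2`, `a_i = (s² + |z_i|²)^α`, and by symmetry `x = |z₁| ≥ y = |z₂|`;
let `T = s² + x² + y²` and `h = |z₁ - z₂| ≥ x - y`. For `B` between `T / K` and `T` one has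
`B^α ≈ T^α` up to `K^{|α|}`.

Lower bound: `⟪a₁z₁ - a₂z₂, z₁ - z₂⟫ = (a₁x - a₂y)(x - y) + (a₁ + a₂)/2 · (h² - (x - y)²)`.
The scalar map `t ↦ (s² + t²)^α t` has derivative `(s² + t²)^{α-1}(s² + (1 + 2α)t²)`, so
`a₁x - a₂y ≳ T^α (x - y)` (for `α ≥ 0` simply because `a₁ ≥ a₂`), while `a₁ ≳ T^α`.

Upper bound: if `2y < x` then `h ≥ x / 2` and, the scalar map being increasing,
`|a₁z₁ - a₂z₂| ≤ 2a₁x ≲ T^α h`. Otherwise `s² + t² ≥ T / 5` on `[y, x]`, and the mean value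
theorem for `t ↦ (s² + t²)^α` bounds `|a₁ - a₂| y` by `2|α| 5^{|α|} T^α (x - y)`.
-/

open Real Set
open scoped RealInnerProductSpace

lemma rpow_le_rpow_abs_mul_rpow {B T K α : ℝ} (hB : 0 < B) (hBT : B ≤ T) (hTK : T ≤ K * B) :
    B ^ α ≤ K ^ |α| * T ^ α := by
  have hK : 1 ≤ K := le_of_mul_le_mul_right (by linarith) hB
  have hT : 0 < T := hB.trans_le hBT
  rcases le_or_gt 0 α with hα | hα
  · calc B ^ α ≤ 1 * T ^ α := by rw [one_mul]; exact rpow_le_rpow hB.le hBT hα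
      _ ≤ K ^ |α| * T ^ α := by gcongr; exact one_le_rpow hK (abs_nonneg α)
  · calc B ^ α ≤ (T / K) ^ α :=
          rpow_le_rpow_of_nonpos (by positivity) ((div_le_iff₀ (by linarith)).2 (by linarith)) hα.le
      _ = K ^ |α| * T ^ α := by
          rw [div_rpow hT.le (by linarith), abs_of_neg hα, rpow_neg (by linarith), div_eq_inv_mul]

lemma rpow_neg_abs_mul_rpow_le_rpow {B T K α : ℝ} (hB : 0 < B) (hBT : B ≤ T) (hTK : T ≤ K * B) :
    K ^ (-|α|) * T ^ α ≤ B ^ α := by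
  have hK : 1 ≤ K := le_of_mul_le_mul_right (by linarith) hB
  have hT : 0 < T := hB.trans_le hBT
  rcases le_or_gt 0 α with hα | hα
  · calc K ^ (-|α|) * T ^ α = (T / K) ^ α := by
          rw [div_rpow hT.le (by linarith), abs_of_nonneg hα, rpow_neg (by linarith),
            inv_mul_eq_div]
      _ ≤ B ^ α :=
          rpow_le_rpow (by positivity) ((div_le_iff₀ (by linarith)).2 (by linarith)) hα
  · calc K ^ (-|α|) * T ^ α ≤ 1 * T ^ α := by
          gcongr; exact rpow_le_one_of_one_le_of_nonpos hK (by simp)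
      _ ≤ B ^ α := by rw [one_mul]; exact rpow_le_rpow_of_nonpos hB hBT hα.le

lemma hasDerivAt_sq_add_sq_rpow (s α : ℝ) {t : ℝ} (ht : 0 < s ^ 2 + t ^ 2) :
    HasDerivAt (fun u => (s ^ 2 + u ^ 2) ^ α) (2 * α * t * (s ^ 2 + t ^ 2) ^ (α - 1)) t := by
  have := ((hasDerivAt_pow 2 t).const_add (s ^ 2)).rpow_const (p := α) (Or.inl ht.ne')
  convert this using 1
  push_cast; ring

lemma hasDerivAt_sq_add_sq_rpow_mul_self (s α : ℝ) {t : ℝ} (ht : 0 < s ^ 2 + t ^ 2) :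
    HasDerivAt (fun u => (s ^ 2 + u ^ 2) ^ α * u)
      ((s ^ 2 + t ^ 2) ^ (α - 1) * (s ^ 2 + (1 + 2 * α) * t ^ 2)) t := by
  have hpow : (s ^ 2 + t ^ 2) ^ α = (s ^ 2 + t ^ 2) ^ (α - 1) * (s ^ 2 + t ^ 2) := by
    rw [← rpow_add_one ht.ne', sub_add_cancel]
  refine ((hasDerivAt_sq_add_sq_rpow s α ht).mul (hasDerivAt_id' t)).congr_deriv ?_
  rw [hpow]
  ring

lemma one_add_two_mul_mul_sub_le_of_nonpos {s α x y : ℝ} (hα₀ : -(1 / 2) ≤ α) (hα : α ≤ 0)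
    (hy : 0 ≤ y) (hyx : y ≤ x) :
    (1 + 2 * α) * (s ^ 2 + x ^ 2) ^ α * (x - y) ≤
      (s ^ 2 + x ^ 2) ^ α * x - (s ^ 2 + y ^ 2) ^ α * y := by
  rcases (add_nonneg (sq_nonneg s) (sq_nonneg y)).eq_or_lt with hsy | hsy
  · obtain ⟨rfl, rfl⟩ : s = 0 ∧ y = 0 := by constructor <;> nlinarith [sq_nonneg s, sq_nonneg y]
    have : 0 ≤ ((0 : ℝ) ^ 2 + x ^ 2) ^ α * x := by positivity
    nlinarith
  have hpos : ∀ t ∈ Icc y x, 0 < s ^ 2 + t ^ 2 := fun t ht => by nlinarith [ht.1]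
  have hderiv : ∀ t ∈ Icc y x, HasDerivAt (fun u => (s ^ 2 + u ^ 2) ^ α * u)
      ((s ^ 2 + t ^ 2) ^ (α - 1) * (s ^ 2 + (1 + 2 * α) * t ^ 2)) t :=
    fun t ht => hasDerivAt_sq_add_sq_rpow_mul_self s α (hpos t ht)
  refine (convex_Icc y x).mul_sub_le_image_sub_of_le_deriv
    (fun t ht => (hderiv t ht).continuousAt.continuousWithinAt)
    (fun t ht => (hderiv t (interior_subset ht)).differentiableAt.differentiableWithinAt)
    (fun t ht => ?_) y ⟨le_rfl, hyx⟩ x ⟨hyx, le_rfl⟩ hyx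
  rw [interior_Icc] at ht
  have ht' : t ∈ Icc y x := Ioo_subset_Icc_self ht
  have hst := hpos t ht'
  rw [(hderiv t ht').deriv]
  calc (1 + 2 * α) * (s ^ 2 + x ^ 2) ^ α ≤ (1 + 2 * α) * (s ^ 2 + t ^ 2) ^ α := by
        refine mul_le_mul_of_nonneg_left (rpow_le_rpow_of_nonpos hst ?_ hα) (by linarith)
        nlinarith [ht.1, ht.2]
    _ = (s ^ 2 + t ^ 2) ^ (α - 1) * ((1 + 2 * α) * (s ^ 2 + t ^ 2)) := by
        rw [rpow_sub_one hst.ne']; field_simp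
    _ ≤ (s ^ 2 + t ^ 2) ^ (α - 1) * (s ^ 2 + (1 + 2 * α) * t ^ 2) := by
        gcongr
        nlinarith [sq_nonneg s]

lemma sq_add_sq_rpow_mul_le {s α x y : ℝ} (hα : -(1 / 2) ≤ α) (hy : 0 ≤ y) (hyx : y ≤ x) :
    (s ^ 2 + y ^ 2) ^ α * y ≤ (s ^ 2 + x ^ 2) ^ α * x := by
  rcases le_total 0 α with hα₀ | hα₀
  · gcongr
  · have hgrowth := one_add_two_mul_mul_sub_le_of_nonpos (s := s) hα hα₀ hy hyx
    have hcoeff : 0 ≤ 1 + 2 * α := by linarith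
    have hsub : 0 ≤ x - y := by linarith
    have : 0 ≤ (1 + 2 * α) * (s ^ 2 + x ^ 2) ^ α * (x - y) := by positivity
    linarith

lemma mul_rpow_mul_sub_le {s α x y : ℝ} (hα : -(1 / 2) ≤ α) (hy : 0 ≤ y) (hyx : y ≤ x)
    (hx : 0 < s ^ 2 + x ^ 2) :
    min (1 + 2 * α) (2 ^ (-|α|) / 2) * (s ^ 2 + x ^ 2 + y ^ 2) ^ α * (x - y) ≤
      (s ^ 2 + x ^ 2) ^ α * x - (s ^ 2 + y ^ 2) ^ α * y := by
  have hsub : 0 ≤ x - y := by linarith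
  rcases le_total 0 α with hα₀ | hα₀
  · have hcomp : (2 : ℝ) ^ (-|α|) * (s ^ 2 + x ^ 2 + y ^ 2) ^ α ≤ (s ^ 2 + x ^ 2) ^ α :=
      rpow_neg_abs_mul_rpow_le_rpow hx (by nlinarith) (by nlinarith)
    have hmono : (s ^ 2 + y ^ 2) ^ α ≤ (s ^ 2 + x ^ 2) ^ α := by gcongr
    calc min (1 + 2 * α) (2 ^ (-|α|) / 2) * (s ^ 2 + x ^ 2 + y ^ 2) ^ α * (x - y)
        ≤ (2 ^ (-|α|)) * (s ^ 2 + x ^ 2 + y ^ 2) ^ α * (x - y) := by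
          gcongr
          exact (min_le_right _ _).trans (half_le_self (by positivity))
      _ ≤ (s ^ 2 + x ^ 2) ^ α * (x - y) := by gcongr
      _ ≤ (s ^ 2 + x ^ 2) ^ α * x - (s ^ 2 + y ^ 2) ^ α * y := by nlinarith
  · calc min (1 + 2 * α) (2 ^ (-|α|) / 2) * (s ^ 2 + x ^ 2 + y ^ 2) ^ α * (x - y)
        ≤ (1 + 2 * α) * (s ^ 2 + x ^ 2) ^ α * (x - y) := by
          refine mul_le_mul_of_nonneg_right (mul_le_mul (min_le_left _ _) ?_ (by positivity)
            (by linarith)) hsub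
          exact rpow_le_rpow_of_nonpos hx (by nlinarith) hα₀
      _ ≤ (s ^ 2 + x ^ 2) ^ α * x - (s ^ 2 + y ^ 2) ^ α * y :=
          one_add_two_mul_mul_sub_le_of_nonpos hα hα₀ hy hyx

lemma abs_sub_rpow_mul_le {s α x y M : ℝ} (hy : 0 ≤ y) (hyx : y ≤ x) (hsy : 0 < s ^ 2 + y ^ 2)
    (hM : ∀ t ∈ Icc y x, (s ^ 2 + t ^ 2) ^ α ≤ M) :
    |(s ^ 2 + x ^ 2) ^ α - (s ^ 2 + y ^ 2) ^ α| * y ≤ 2 * |α| * M * (x - y) := by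
  have hpos : ∀ t ∈ Icc y x, 0 < s ^ 2 + t ^ 2 := fun t ht => by nlinarith [ht.1]
  have key := norm_image_sub_le_of_norm_deriv_le_segment' (C := 2 * |α| * M)
    (f := fun u => y * (s ^ 2 + u ^ 2) ^ α)
    (fun t ht => ((hasDerivAt_sq_add_sq_rpow s α (hpos t ht)).const_mul y).hasDerivWithinAt)
    (fun t ht => ?_) x ⟨hyx, le_rfl⟩
  · rw [Real.norm_eq_abs, ← mul_sub, abs_mul, abs_of_nonneg hy, mul_comm] at key
    exact key
  · have ht' : t ∈ Icc y x := Ico_subset_Icc_self ht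
    have hst := hpos t ht'
    have hyt : y * t ≤ s ^ 2 + t ^ 2 := by nlinarith [ht.1]
    have ht0 : 0 ≤ t := hy.trans ht.1
    rw [Real.norm_eq_abs, abs_mul, abs_mul, abs_mul, abs_mul, abs_of_nonneg hy, abs_of_nonneg ht0,
      abs_two, abs_of_pos (rpow_pos_of_pos hst _)]
    calc y * (2 * |α| * t * (s ^ 2 + t ^ 2) ^ (α - 1))
        = 2 * |α| * ((y * t) * (s ^ 2 + t ^ 2) ^ (α - 1)) := by ring
      _ ≤ 2 * |α| * ((s ^ 2 + t ^ 2) * (s ^ 2 + t ^ 2) ^ (α - 1)) := by gcongr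
      _ = 2 * |α| * (s ^ 2 + t ^ 2) ^ α := by rw [rpow_sub_one hst.ne']; field_simp
      _ ≤ 2 * |α| * M := by gcongr; exact hM t ht'

section InnerProductSpace

variable {F : Type*} [NormedAddCommGroup F] [InnerProductSpace ℝ F]

lemma mul_norm_sub_le_norm_smul_sub_smul {a₁ a₂ m : ℝ} {z₁ z₂ : F}
    (h₁ : m * (‖z₁‖ - ‖z₂‖) ^ 2 ≤ (a₁ * ‖z₁‖ - a₂ * ‖z₂‖) * (‖z₁‖ - ‖z₂‖))
    (h₂ : 2 * m ≤ a₁ + a₂) :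
    m * ‖z₁ - z₂‖ ≤ ‖a₁ • z₁ - a₂ • z₂‖ := by
  rcases (norm_nonneg (z₁ - z₂)).eq_or_lt with hz | hz
  · rw [← hz, mul_zero]; exact norm_nonneg _
  have hsq : ‖z₁ - z₂‖ ^ 2 = ‖z₁‖ ^ 2 + ‖z₂‖ ^ 2 - 2 * ⟪z₁, z₂⟫ := by
    rw [norm_sub_sq_real]; ring
  have hinner : ⟪a₁ • z₁ - a₂ • z₂, z₁ - z₂⟫ = (a₁ * ‖z₁‖ - a₂ * ‖z₂‖) * (‖z₁‖ - ‖z₂‖) +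
      (a₁ + a₂) / 2 * (‖z₁ - z₂‖ ^ 2 - (‖z₁‖ - ‖z₂‖) ^ 2) := by
    rw [hsq]
    simp only [inner_sub_left, inner_sub_right, real_inner_smul_left, real_inner_self_eq_norm_sq,
      real_inner_comm z₁ z₂]
    ring
  have hgap : (‖z₁‖ - ‖z₂‖) ^ 2 ≤ ‖z₁ - z₂‖ ^ 2 :=
    sq_le_sq' (by linarith [norm_sub_norm_le z₂ z₁, norm_sub_rev z₁ z₂]) (norm_sub_norm_le z₁ z₂)
  refine le_of_mul_le_mul_right ?_ hz
  calc m * ‖z₁ - z₂‖ * ‖z₁ - z₂‖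
      ≤ ⟪a₁ • z₁ - a₂ • z₂, z₁ - z₂⟫ := by rw [hinner]; nlinarith
    _ ≤ ‖a₁ • z₁ - a₂ • z₂‖ * ‖z₁ - z₂‖ := real_inner_le_norm _ _

lemma mul_norm_sub_le_norm_rpow_smul_sub_of_norm_le {s α : ℝ} (hα : -(1 / 2) ≤ α) {z₁ z₂ : F}
    (hz : ‖z₂‖ ≤ ‖z₁‖) (hz₁ : 0 < s ^ 2 + ‖z₁‖ ^ 2) :
    min (1 + 2 * α) (2 ^ (-|α|) / 2) * (s ^ 2 + ‖z₁‖ ^ 2 + ‖z₂‖ ^ 2) ^ α * ‖z₁ - z₂‖ ≤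
      ‖(s ^ 2 + ‖z₁‖ ^ 2) ^ α • z₁ - (s ^ 2 + ‖z₂‖ ^ 2) ^ α • z₂‖ := by
  refine mul_norm_sub_le_norm_smul_sub_smul ?_ ?_
  · refine (le_of_eq (by ring)).trans (mul_le_mul_of_nonneg_right
      (mul_rpow_mul_sub_le hα (norm_nonneg _) hz hz₁) (sub_nonneg.2 hz))
  · have hcomp : (2 : ℝ) ^ (-|α|) * (s ^ 2 + ‖z₁‖ ^ 2 + ‖z₂‖ ^ 2) ^ α ≤ (s ^ 2 + ‖z₁‖ ^ 2) ^ α :=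
      rpow_neg_abs_mul_rpow_le_rpow hz₁ (by nlinarith) (by nlinarith [norm_nonneg z₂])
    have hmin : 2 * min (1 + 2 * α) (2 ^ (-|α|) / 2) ≤ 2 ^ (-|α|) := by
      linarith [min_le_right (1 + 2 * α) (2 ^ (-|α|) / 2)]
    calc 2 * (min (1 + 2 * α) (2 ^ (-|α|) / 2) * (s ^ 2 + ‖z₁‖ ^ 2 + ‖z₂‖ ^ 2) ^ α)
        ≤ 2 ^ (-|α|) * (s ^ 2 + ‖z₁‖ ^ 2 + ‖z₂‖ ^ 2) ^ α := by
          rw [← mul_assoc]; exact mul_le_mul_of_nonneg_right hmin (by positivity)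
      _ ≤ (s ^ 2 + ‖z₁‖ ^ 2) ^ α + (s ^ 2 + ‖z₂‖ ^ 2) ^ α := by
          linarith [rpow_nonneg (by positivity : (0 : ℝ) ≤ s ^ 2 + ‖z₂‖ ^ 2) α]

lemma norm_smul_sub_smul_le {a₁ a₂ : ℝ} (ha₁ : 0 ≤ a₁) (z₁ z₂ : F) :
    ‖a₁ • z₁ - a₂ • z₂‖ ≤ a₁ * ‖z₁ - z₂‖ + |a₁ - a₂| * ‖z₂‖ := by
  calc ‖a₁ • z₁ - a₂ • z₂‖ = ‖a₁ • (z₁ - z₂) + (a₁ - a₂) • z₂‖ := by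
        rw [smul_sub, sub_smul, sub_add_sub_cancel]
    _ ≤ a₁ * ‖z₁ - z₂‖ + |a₁ - a₂| * ‖z₂‖ := by
        refine (norm_add_le _ _).trans_eq ?_
        rw [norm_smul, norm_smul, Real.norm_eq_abs, Real.norm_eq_abs, abs_of_nonneg ha₁]

lemma norm_rpow_smul_sub_le_mul_norm_sub_of_norm_le {s α : ℝ} (hα : -(1 / 2) ≤ α) {z₁ z₂ : F}
    (hz : ‖z₂‖ ≤ ‖z₁‖) (hz₁ : 0 < s ^ 2 + ‖z₁‖ ^ 2) :
    ‖(s ^ 2 + ‖z₁‖ ^ 2) ^ α • z₁ - (s ^ 2 + ‖z₂‖ ^ 2) ^ α • z₂‖ ≤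
      (4 + 2 * |α|) * 5 ^ |α| * (s ^ 2 + ‖z₁‖ ^ 2 + ‖z₂‖ ^ 2) ^ α * ‖z₁ - z₂‖ := by
  rw [mul_assoc (4 + 2 * |α|)]
  set x := ‖z₁‖
  set y := ‖z₂‖
  set h := ‖z₁ - z₂‖
  set a₁ := (s ^ 2 + x ^ 2) ^ α
  set a₂ := (s ^ 2 + y ^ 2) ^ α
  set K := 5 ^ |α| * (s ^ 2 + x ^ 2 + y ^ 2) ^ α
  have hy : 0 ≤ y := norm_nonneg _
  have hh : 0 ≤ h := norm_nonneg _
  have hxy : x - y ≤ h := norm_sub_norm_le z₁ z₂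
  have hK : 0 ≤ K := by positivity
  have ha₁ : a₁ ≤ K := rpow_le_rpow_abs_mul_rpow hz₁ (by nlinarith) (by nlinarith)
  have ha₁₀ : 0 ≤ a₁ := by positivity
  rcases le_or_gt x (2 * y) with hnear | hfar
  · have hsy : 0 < s ^ 2 + y ^ 2 := by nlinarith
    have hM : ∀ t ∈ Icc y x, (s ^ 2 + t ^ 2) ^ α ≤ K := fun t ht =>
      have ht₀ : 0 ≤ t := hy.trans ht.1
      rpow_le_rpow_abs_mul_rpow (by nlinarith [ht.1])
        (by nlinarith [pow_le_pow_left₀ ht₀ ht.2 2]) (by nlinarith [pow_le_pow_left₀ hy ht.1 2])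
    have hdiff : |a₁ - a₂| * y ≤ 2 * |α| * K * (x - y) := abs_sub_rpow_mul_le hy hz hsy hM
    calc ‖a₁ • z₁ - a₂ • z₂‖ ≤ a₁ * h + |a₁ - a₂| * y := norm_smul_sub_smul_le ha₁₀ z₁ z₂
      _ ≤ K * h + 2 * |α| * K * h := by
          have : 0 ≤ 2 * |α| * K := by positivity
          nlinarith [mul_le_mul_of_nonneg_right ha₁ hh, mul_le_mul_of_nonneg_left hxy this]
      _ ≤ (4 + 2 * |α|) * K * h := by nlinarith [mul_nonneg hK hh]
  · calc ‖a₁ • z₁ - a₂ • z₂‖ ≤ a₁ * x + a₂ * y := by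
          refine (norm_sub_le _ _).trans_eq ?_
          rw [norm_smul, norm_smul, Real.norm_eq_abs, Real.norm_eq_abs, abs_of_nonneg ha₁₀,
            abs_of_nonneg (by positivity)]
      _ ≤ 2 * (a₁ * x) := by linarith [sq_add_sq_rpow_mul_le (s := s) hα hy hz]
      _ ≤ 2 * (K * (2 * h)) := by gcongr; linarith
      _ ≤ (4 + 2 * |α|) * K * h := by nlinarith [mul_nonneg hK hh, abs_nonneg α]

lemma norm_rpow_smul_sub_rpow_smul_bounds {α : ℝ} (hα : -(1 / 2) ≤ α) (s : ℝ) (z₁ z₂ : F) :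
    min (1 + 2 * α) (2 ^ (-|α|) / 2) * (s ^ 2 + ‖z₁‖ ^ 2 + ‖z₂‖ ^ 2) ^ α * ‖z₁ - z₂‖ ≤
        ‖(s ^ 2 + ‖z₁‖ ^ 2) ^ α • z₁ - (s ^ 2 + ‖z₂‖ ^ 2) ^ α • z₂‖ ∧
      ‖(s ^ 2 + ‖z₁‖ ^ 2) ^ α • z₁ - (s ^ 2 + ‖z₂‖ ^ 2) ^ α • z₂‖ ≤
        (4 + 2 * |α|) * 5 ^ |α| * (s ^ 2 + ‖z₁‖ ^ 2 + ‖z₂‖ ^ 2) ^ α * ‖z₁ - z₂‖ := by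
  wlog hz : ‖z₂‖ ≤ ‖z₁‖ generalizing z₁ z₂
  · have := this z₂ z₁ (le_of_not_ge hz)
    rwa [norm_sub_rev z₂, norm_sub_rev (_ • z₂), add_right_comm] at this
  rcases (add_nonneg (sq_nonneg s) (sq_nonneg ‖z₁‖)).eq_or_lt with hz₁ | hz₁
  · have h₁ : z₁ = 0 := norm_eq_zero.1 (by nlinarith [norm_nonneg z₁])
    have h₂ : z₂ = 0 := by
      rw [h₁, norm_zero] at hz
      exact norm_le_zero_iff.1 hz
    simp [h₁, h₂]
  · exact ⟨mul_norm_sub_le_norm_rpow_smul_sub_of_norm_le hα hz hz₁,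
      norm_rpow_smul_sub_le_mul_norm_sub_of_norm_le hα hz hz₁⟩

end InnerProductSpace

theorem stmt5_general (n N : ℕ) (p : ℝ) (hp : 3 / 2 < p) :
    ∃ c₁ c₂ : ℝ, 0 < c₁ ∧ 0 < c₂ ∧
      ∀ (s : ℝ), 0 ≤ s → ∀ z₁ z₂ : EuclideanSpace ℝ (Fin N × Fin n),
        c₁ * (s ^ 2 + ‖z₁‖ ^ 2 + ‖z₂‖ ^ 2) ^ ((p - 2) / 2) * ‖z₁ - z₂‖ ≤
          ‖(s ^ 2 + ‖z₁‖ ^ 2) ^ ((p - 2) / 2) • z₁ - (s ^ 2 + ‖z₂‖ ^ 2) ^ ((p - 2) / 2) • z₂‖ ∧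
        ‖(s ^ 2 + ‖z₁‖ ^ 2) ^ ((p - 2) / 2) • z₁ - (s ^ 2 + ‖z₂‖ ^ 2) ^ ((p - 2) / 2) • z₂‖ ≤
          c₂ * (s ^ 2 + ‖z₁‖ ^ 2 + ‖z₂‖ ^ 2) ^ ((p - 2) / 2) * ‖z₁ - z₂‖ := by
  have hα : -(1 / 2) ≤ (p - 2) / 2 := by linarith
  refine ⟨min (1 + 2 * ((p - 2) / 2)) (2 ^ (-|(p - 2) / 2|) / 2),
    (4 + 2 * |(p - 2) / 2|) * 5 ^ |(p - 2) / 2|, lt_min (by linarith) (by positivity),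
    by positivity, fun s _ z₁ z₂ => norm_rpow_smul_sub_rpow_smul_bounds hα s z₁ z₂⟩

/-- Equivalence `|W_s(z₁) − W_s(z₂)| ≈ (s² + |z₁|² + |z₂|²)^{(p−2)/2}|z₁ − z₂|`
for the vector field `W_s(z) := (s² + |z|²)^{(p−2)/2} z`, `p > 3/2`. -/
theorem stmt5 (n N : ℕ) (hn : 0 < n) (hN : 0 < N) (p : ℝ) (hp : 3 / 2 < p) :
    ∃ c₁ c₂ : ℝ, 0 < c₁ ∧ 0 < c₂ ∧
      ∀ (s : ℝ), 0 ≤ s → ∀ z₁ z₂ : EuclideanSpace ℝ (Fin N × Fin n),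
        c₁ * (s ^ 2 + ‖z₁‖ ^ 2 + ‖z₂‖ ^ 2) ^ ((p - 2) / 2) * ‖z₁ - z₂‖ ≤
          ‖(s ^ 2 + ‖z₁‖ ^ 2) ^ ((p - 2) / 2) • z₁ - (s ^ 2 + ‖z₂‖ ^ 2) ^ ((p - 2) / 2) • z₂‖ ∧
        ‖(s ^ 2 + ‖z₁‖ ^ 2) ^ ((p - 2) / 2) • z₁ - (s ^ 2 + ‖z₂‖ ^ 2) ^ ((p - 2) / 2) • z₂‖ ≤
          c₂ * (s ^ 2 + ‖z₁‖ ^ 2 + ‖z₂‖ ^ 2) ^ ((p - 2) / 2) * ‖z₁ - z₂‖ :=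
  stmt5_general n N p hp
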